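/- arXiv:1211.2827 — 2 statements merged into one kernel-verified Lean document; each statement's English description precedes it below -/
import Mathlib

section
/- Let g = 2n−1 and E = O(nσ+F)⊕O((n+1)σ+2F) on S = P^1×P^1. Using the same formulas for λ_C and κ_C as in the even case, one gets λ_C = 3n−1 and κ_C = 15n−15; consequently δ_C = 12λ_C − κ_C = 21n+3, and δ_C/λ_C = 7 + 20/(3g+1). -/
/-- Odd genus sweeping family: with `g = 2n-1`, `E = O(nσ+F)⊕O((n+1)σ+2F)` on
`S = P^1 × P^1`, the same formulas give `λ_C = 3n-1`, `κ_C = 15n-15`,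
`δ_C = 21n+3` and slope `δ_C/λ_C = 7 + 20/(3g+1)`. -/
theorem stmt_2 (n : ℕ) (hn : 3 ≤ n) (g : ℚ) (hg : g = 2 * n - 1)
    (M : Type*) [AddCommGroup M] [Module ℚ M]
    (B : M →ₗ[ℚ] M →ₗ[ℚ] ℚ) (σ F ω c1 : M)
    (hσσ : B σ σ = 0) (hFF : B F F = 0) (hσF : B σ F = 1) (hFσ : B F σ = 1)
    (hω : ω = (-2 : ℚ) • σ)
    (hc1 : c1 = (2 * n + 1 : ℚ) • σ + (3 : ℚ) • F)
    (c2 : ℚ) (hc2 : c2 = B ((n : ℚ) • σ + F) ((n + 1 : ℚ) • σ + (2 : ℚ) • F))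
    (lamS kapS delS : ℚ) (hlS : lamS = 0) (hkS : kapS = 0) (hdS : delS = 0)
    (lamC kapC delC : ℚ)
    (hlamC : lamC = lamS + (kapS + delS) / 6 + B c1 c1 / 2 + B c1 ω / 2 - c2)
    (hkapC : kapC = 3 * kapS + 2 * B c1 c1 + 4 * B c1 ω - 3 * c2)
    (hdelC : delC = 12 * lamC - kapC) :
    lamC = 3 * n - 1 ∧ kapC = 15 * n - 15 ∧ delC = 21 * n + 3 ∧
      delC / lamC = 7 + 20 / (3 * g + 1) := by
  subst hω hc1 hc2 hlS hkS hdS hg hdelC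
  simp only [map_add, map_smul, LinearMap.add_apply, LinearMap.smul_apply,
    smul_eq_mul, hσσ, hFF, hσF, hFσ] at hlamC hkapC
  have hn' : (3 : ℚ) ≤ (n : ℚ) := by exact_mod_cast hn
  have hlam : lamC = 3 * n - 1 := by rw [hlamC]; ring
  have hkap : kapC = 15 * n - 15 := by rw [hkapC]; ring
  refine ⟨hlam, hkap, by rw [hlam, hkap]; ring, ?_⟩
  rw [hlam, hkap]
  have h1 : (3 : ℚ) * n - 1 ≠ 0 := by nlinarith
  have h2 : (3 : ℚ) * (2 * n - 1) + 1 ≠ 0 := by nlinarith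
  rw [show (3 : ℚ) * (2 * n - 1) + 1 = 2 * (3 * n - 1) by ring]
  field_simp
  ring
end

section
/- Let n ≥ 1 and ζ a primitive n-th root of unity in ℂ. For integers a, b, define χ = (1/n)·Σ_{i=1}^{n−1} (ζ^{ia} + ζ^{ib})/(2 − ζ^i − ζ^{−i}). Then χ is a real rational number. -/
/-- The orbifold correction term
`χ = (1/n) Σ_{i=1}^{n-1} (ζ^{ia} + ζ^{ib})/(2 - ζ^i - ζ^{-i})`
for a primitive `n`-th root of unity `ζ` and integers `a, b` is a (real) rational
number. -/
theorem stmt_3 (n : ℕ) (hn : 1 ≤ n) (ζ : ℂ) (hζ : IsPrimitiveRoot ζ n)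
    (a b : ℤ) :
    ∃ q : ℚ, (1 / (n : ℂ)) *
      ∑ i ∈ Finset.Icc 1 (n - 1),
        (ζ ^ ((i : ℤ) * a) + ζ ^ ((i : ℤ) * b)) /
          (2 - ζ ^ (i : ℤ) - ζ ^ (-(i : ℤ))) = (q : ℂ) := by
  have hn0 : 0 < n := hn
  haveI : NeZero n := ⟨hn0.ne'⟩
  set K := IntermediateField.adjoin ℚ ({ζ} : Set ℂ) with hK
  have hζK : ζ ∈ K := IntermediateField.subset_adjoin ℚ _ rfl
  set z : K := ⟨ζ, hζK⟩ with hzdef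
  have hz : IsPrimitiveRoot z n := by
    rwa [← IsPrimitiveRoot.coe_submonoidClass_iff (B := IntermediateField ℚ ℂ)]
  have hnpnat : IsPrimitiveRoot ζ ((⟨n, hn0⟩ : ℕ+) : ℕ) := hζ
  have hint : IsIntegral ℚ ζ := (hζ.isIntegral hn0).tower_top
  have hts : (IntermediateField.adjoin ℚ ({ζ} : Set ℂ)).toSubalgebra
      = Algebra.adjoin ℚ ({ζ} : Set ℂ) :=
    IntermediateField.adjoin_simple_toSubalgebra_of_isAlgebraic hint.isAlgebraic
  haveI : IsCyclotomicExtension {n} ℚ (Algebra.adjoin ℚ ({ζ} : Set ℂ)) :=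
    hζ.adjoin_isCyclotomicExtension ℚ
  haveI : IsCyclotomicExtension {n} ℚ K :=
    IsCyclotomicExtension.equiv _ ℚ _ (Subalgebra.equivOfEq _ _ hts.symm)
  haveI : FiniteDimensional ℚ K :=
    IsCyclotomicExtension.finiteDimensional {n} ℚ ↥K
  haveI : IsGalois ℚ ↥K := IsCyclotomicExtension.isGalois (S := {n}) (K := ℚ) (L := ↥K)
  have hfix : IntermediateField.fixedField (⊤ : Subgroup (K ≃ₐ[ℚ] K)) = ⊥ := by
    have h := IsGalois.fixedField_fixingSubgroup (⊥ : IntermediateField ℚ ↥K)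
    rwa [IntermediateField.fixingSubgroup_bot] at h
  -- the rational function
  set F : K → K := fun x => (x ^ a + x ^ b) / (2 - x - x⁻¹) with hF
  set S : Finset K := (Polynomial.nthRootsFinset n (1 : K)).erase 1 with hS
  set T : K := ∑ ρ ∈ S, F ρ with hT
  -- Step B: T is fixed by every automorphism
  have hfixed : ∀ σ : K ≃ₐ[ℚ] K, σ T = T := by
    intro σ
    have himg : S.image σ = S := by
      apply Finset.eq_of_subset_of_card_le
      · intro x hx
        simp only [Finset.mem_image] at hx
        obtain ⟨ρ, hρ, rfl⟩ := hx
        rw [hS, Finset.mem_erase, Polynomial.mem_nthRootsFinset hn0] at hρ ⊢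
        refine ⟨fun h => hρ.1 (σ.injective (by simpa using h)), ?_⟩
        rw [← map_pow, hρ.2, map_one]
      · rw [Finset.card_image_of_injective _ σ.injective]
    calc σ T = ∑ ρ ∈ S, F (σ ρ) := by
          rw [hT, map_sum]
          refine Finset.sum_congr rfl fun ρ _ => ?_
          simp only [hF, map_div₀, map_add, map_zpow₀, map_sub, map_inv₀, map_ofNat]
      _ = ∑ x ∈ S.image σ, F x := by
          rw [Finset.sum_image (fun x _ y _ h => σ.injective h)]
      _ = T := by rw [himg, hT]
  have hTbot : T ∈ (⊥ : IntermediateField ℚ K) := by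
    rw [← hfix]
    exact fun σ => hfixed σ
  rw [IntermediateField.mem_bot] at hTbot
  obtain ⟨q, hq⟩ := hTbot
  refine ⟨q / n, ?_⟩
  -- Step A: the complex sum equals the image of T
  have hzne : z ≠ 0 := hz.ne_zero hn0.ne'
  have hsum : ∑ i ∈ Finset.Icc 1 (n - 1),
      (ζ ^ ((i : ℤ) * a) + ζ ^ ((i : ℤ) * b)) / (2 - ζ ^ (i : ℤ) - ζ ^ (-(i : ℤ)))
      = algebraMap K ℂ T := by
    rw [hT, map_sum]
    rw [Finset.sum_bij (fun (i : ℕ) _ => z ^ i)]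
    · -- membership
      intro i hi
      rw [Finset.mem_Icc] at hi
      rw [hS, Finset.mem_erase, Polynomial.mem_nthRootsFinset hn0]
      have hilt : i < n := lt_of_le_of_lt hi.2 (Nat.sub_lt hn0 one_pos)
      exact ⟨hz.pow_ne_one_of_pos_of_lt (Nat.one_le_iff_ne_zero.mp hi.1) hilt, by rw [← pow_mul, mul_comm, pow_mul, hz.pow_eq_one, one_pow]⟩
    · -- injectivity
      intro i hi j hj h
      rw [Finset.mem_Icc] at hi hj
      exact hz.pow_inj (lt_of_le_of_lt hi.2 (Nat.sub_lt hn0 one_pos))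
        (lt_of_le_of_lt hj.2 (Nat.sub_lt hn0 one_pos)) h
    · -- surjectivity
      intro ρ hρ
      rw [hS, Finset.mem_erase, Polynomial.mem_nthRootsFinset hn0] at hρ
      obtain ⟨i, hilt, hie⟩ := hz.eq_pow_of_pow_eq_one hρ.2
      have hi0 : i ≠ 0 := by
        rintro rfl
        exact hρ.1 (by simpa using hie.symm)
      exact ⟨i, Finset.mem_Icc.mpr ⟨Nat.one_le_iff_ne_zero.mpr hi0, Nat.le_sub_one_of_lt hilt⟩, hie⟩
    · -- values
      intro i hi
      have h1 : ∀ c : ℤ, ζ ^ ((i : ℤ) * c) = algebraMap K ℂ ((z ^ i) ^ c) := by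
        intro c
        rw [map_zpow₀, map_pow]
        show ζ ^ ((i : ℤ) * c) = ((ζ : ℂ) ^ i) ^ c
        rw [← zpow_natCast ζ i, ← zpow_mul]
      have h2 : ζ ^ (i : ℤ) = algebraMap K ℂ (z ^ i) := by
        rw [map_pow]; exact (zpow_natCast ζ i)
      have h3 : ζ ^ (-(i : ℤ)) = algebraMap K ℂ (z ^ i)⁻¹ := by
        rw [map_inv₀, map_pow, zpow_neg, zpow_natCast]
        rfl
      rw [h1 a, h1 b, h2, h3, hF]
      simp only [map_div₀, map_add, map_zpow₀, map_sub, map_inv₀, map_ofNat]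
  rw [hsum, ← hq]
  have : (algebraMap K ℂ) ((algebraMap ℚ K) q) = (q : ℂ) := by
    rw [← IsScalarTower.algebraMap_apply]
    simp
  rw [this]
  push_cast
  ring
end
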